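/- arXiv:2408.02160 — 3 statements merged into one kernel-verified Lean document; each statement's English description precedes it below -/
import Mathlib

section
/- For nonnegative random variables u and v with finite expectations, E[ln(1 + u/(v+σ²))] = ∫₀^∞ (1/z) (E[e^{-z(v+σ²)}] − E[e^{-z(u+v+σ²)}]) dz, where σ² > 0 is a constant. -/
open MeasureTheory Set

-- ∫_{(0,∞)} e^{-zt} dz = 1/t for t > 0
lemma exp_int_aux {t : ℝ} (ht : 0 < t) :
    ∫ z in Ioi (0:ℝ), Real.exp (-(z * t)) = 1 / t := by
  have h := integral_comp_mul_right_Ioi (fun x => Real.exp (-x)) 0 ht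
  simp only [zero_mul, smul_eq_mul] at h
  rw [h, integral_exp_neg_Ioi]
  simp [one_div]

-- interval integral of exp(-(z t)) over Ioc a b
lemma exp_interval_aux {z a b : ℝ} (hz : 0 < z) (hab : a ≤ b) :
    ∫ t in Ioc a b, Real.exp (-(z * t))
      = (1 / z) * (Real.exp (-(z * a)) - Real.exp (-(z * b))) := by
  rw [← intervalIntegral.integral_of_le hab]
  have hF : ∀ t ∈ uIcc a b,
      HasDerivAt (fun s => -(Real.exp (-(z * s)) / z)) (Real.exp (-(z * t))) t := by
    intro t _
    have h1 : HasDerivAt (fun s : ℝ => -(z * s)) (-z) t := by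
      simpa using (hasDerivAt_id t).const_mul (-z)
    have h2 : HasDerivAt (fun s => -(Real.exp (-(z * s)) / z)) _ t := (h1.exp.div_const z).neg
    convert h2 using 1
    field_simp
  have hInt : IntervalIntegrable (fun t => Real.exp (-(z * t))) volume a b :=
    (Real.continuous_exp.comp (continuous_const.mul continuous_id).neg).intervalIntegrable a b
  rw [intervalIntegral.integral_eq_sub_of_hasDerivAt hF hInt]
  field_simp
  ring

lemma frullani_aux {a b : ℝ} (ha : 0 < a) (hab : a ≤ b) :
    IntegrableOn (fun z => (1 / z) * (Real.exp (-(z * a)) - Real.exp (-(z * b)))) (Ioi 0) ∧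
    ∫ z in Ioi (0:ℝ), (1 / z) * (Real.exp (-(z * a)) - Real.exp (-(z * b)))
      = Real.log (b / a) := by
  set P := volume.restrict (Ioi (0:ℝ))
  set ν := volume.restrict (Ioc a b)
  set f : ℝ × ℝ → ℝ := fun p => Real.exp (-(p.1 * p.2)) with hf_def
  have hfm : Measurable f := (Real.measurable_exp.comp (measurable_fst.mul measurable_snd).neg)
  have hInt : Integrable f (P.prod ν) := by
    refine ⟨hfm.aestronglyMeasurable, ?_⟩
    have hmeas : AEMeasurable (fun p => ‖f p‖ₑ) (P.prod ν) := hfm.enorm.aemeasurable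
    rw [HasFiniteIntegral, lintegral_prod _ hmeas]
    have inner : ∀ z ∈ Ioi (0:ℝ),
        (∫⁻ t, (‖f (z, t)‖₊ : ENNReal) ∂ν)
          ≤ ENNReal.ofReal (Real.exp (-(z * a))) * ENNReal.ofReal (b - a) := by
      intro z hz
      have : (∫⁻ t, (‖f (z, t)‖₊ : ENNReal) ∂ν)
          ≤ ∫⁻ _ in Ioc a b, ENNReal.ofReal (Real.exp (-(z * a))) := by
        refine setLIntegral_mono measurable_const fun t ht => ?_
        rw [← enorm_eq_nnnorm, Real.enorm_eq_ofReal (Real.exp_pos _).le]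
        exact ENNReal.ofReal_le_ofReal <| Real.exp_le_exp.2 <| neg_le_neg <|
          mul_le_mul_of_nonneg_left ht.1.le (le_of_lt hz)
      refine this.trans ?_
      rw [setLIntegral_const, Real.volume_Ioc]
    calc (∫⁻ z, ∫⁻ t, (‖f (z, t)‖₊ : ENNReal) ∂ν ∂P)
        ≤ ∫⁻ z in Ioi (0:ℝ), ENNReal.ofReal (Real.exp (-(z * a))) * ENNReal.ofReal (b - a) := by
          exact setLIntegral_mono (by fun_prop) inner
      _ = (∫⁻ z in Ioi (0:ℝ), ENNReal.ofReal (Real.exp (-(z * a)))) * ENNReal.ofReal (b - a) := by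
          rw [lintegral_mul_const _ (by fun_prop)]
      _ < ⊤ := by
          refine ENNReal.mul_lt_top ?_ ENNReal.ofReal_lt_top
          have h1 := (exp_neg_integrableOn_Ioi 0 ha).2
          rw [HasFiniteIntegral] at h1
          have : (∫⁻ z in Ioi (0:ℝ), ENNReal.ofReal (Real.exp (-(z * a))))
              = ∫⁻ z in Ioi (0:ℝ), (‖Real.exp (-a * z)‖₊ : ENNReal) := by
            refine lintegral_congr fun z => ?_
            rw [← enorm_eq_nnnorm, Real.enorm_eq_ofReal (Real.exp_pos _).le, neg_mul, mul_comm]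
          rw [this]
          exact h1
  have hswap := integral_integral_swap (f := fun z t => Real.exp (-(z * t))) hInt
  have hR : (∫ t, (∫ z, Real.exp (-(z * t)) ∂P) ∂ν) = Real.log (b / a) := by
    rw [show (∫ t, (∫ z, Real.exp (-(z * t)) ∂P) ∂ν)
        = ∫ t in Ioc a b, 1 / t from
      setIntegral_congr_fun measurableSet_Ioc fun t ht => exp_int_aux (ha.trans_le ht.1.le)]
    rw [← intervalIntegral.integral_of_le hab]
    exact integral_one_div (by rw [uIcc_of_le hab]; exact fun h => absurd h.1 (not_le.2 ha))
  have hL : (∫ z, (∫ t, Real.exp (-(z * t)) ∂ν) ∂P)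
      = ∫ z in Ioi (0:ℝ), (1 / z) * (Real.exp (-(z * a)) - Real.exp (-(z * b))) :=
    setIntegral_congr_fun measurableSet_Ioi fun z hz => exp_interval_aux hz hab
  constructor
  · have hg : Integrable (fun z => ∫ t, f (z, t) ∂ν) P := hInt.integral_prod_left
    refine hg.congr ((ae_restrict_iff' measurableSet_Ioi).2 ?_)
    filter_upwards with z hz
    exact exp_interval_aux hz hab
  · rw [← hL, hswap, hR]

theorem mgf_ergodic_rate {Ω : Type*} [MeasureSpace Ω]
    (μ : Measure Ω) [IsProbabilityMeasure μ]
    (u v : Ω → ℝ) (σ2 : ℝ) (hσ : 0 < σ2)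
    (hu0 : ∀ ω, 0 ≤ u ω) (hv0 : ∀ ω, 0 ≤ v ω)
    (hui : Integrable u μ) (hvi : Integrable v μ)
    (hmgf : ∀ z ∈ Ioi (0 : ℝ),
      Integrable (fun ω => Real.exp (-z * (v ω + σ2))) μ ∧
      Integrable (fun ω => Real.exp (-z * (u ω + v ω + σ2))) μ) :
    ∫ ω, Real.log (1 + u ω / (v ω + σ2)) ∂μ
      = ∫ z in Ioi (0 : ℝ),
          (1 / z) * ((∫ ω, Real.exp (-z * (v ω + σ2)) ∂μ)
            - ∫ ω, Real.exp (-z * (u ω + v ω + σ2)) ∂μ) := by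
  set A : Ω → ℝ := fun ω => v ω + σ2 with hA_def
  set B : Ω → ℝ := fun ω => u ω + v ω + σ2 with hB_def
  have hA0 : ∀ ω, 0 < A ω := fun ω => add_pos_of_nonneg_of_pos (hv0 ω) hσ
  have hAB : ∀ ω, A ω ≤ B ω := fun ω => by simp only [hA_def, hB_def]; linarith [hu0 ω]
  set F : Ω → ℝ → ℝ :=
    fun ω z => (1 / z) * (Real.exp (-(z * A ω)) - Real.exp (-(z * B ω))) with hF_def
  have hpt : ∀ ω, ∫ z in Ioi (0:ℝ), F ω z = Real.log (1 + u ω / (v ω + σ2)) := by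
    intro ω
    rw [(frullani_aux (hA0 ω) (hAB ω)).2]
    congr 1
    have hAne : A ω ≠ 0 := (hA0 ω).ne'
    simp only [hA_def, hB_def] at hAne ⊢
    field_simp
    ring
  have hFi : ∀ ω, IntegrableOn (F ω) (Ioi (0:ℝ)) := fun ω =>
    (frullani_aux (hA0 ω) (hAB ω)).1
  have hFnn : ∀ ω, ∀ z ∈ Ioi (0:ℝ), 0 ≤ F ω z := by
    intro ω z hz
    have hz' : (0:ℝ) < z := hz
    have h1 : Real.exp (-(z * B ω)) ≤ Real.exp (-(z * A ω)) :=
      Real.exp_le_exp.2 (neg_le_neg (mul_le_mul_of_nonneg_left (hAB ω) hz'.le))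
    exact mul_nonneg (by positivity) (sub_nonneg.2 h1)
  have hbound : ∀ ω, Real.log (1 + u ω / (v ω + σ2)) ≤ u ω / σ2 := by
    intro ω
    have hq0 : 0 ≤ u ω / A ω := div_nonneg (hu0 ω) (hA0 ω).le
    have h1 : Real.log (1 + u ω / A ω) ≤ u ω / A ω := by
      have := Real.log_le_sub_one_of_pos (show (0:ℝ) < 1 + u ω / A ω by linarith)
      linarith
    have h2 : u ω / A ω ≤ u ω / σ2 := by
      apply div_le_div_of_nonneg_left (hu0 ω) hσ
      · simp only [hA_def]; linarith [hv0 ω]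
    exact h1.trans h2
  set P := volume.restrict (Ioi (0:ℝ))
  -- product integrability
  have hAm : AEStronglyMeasurable A μ := hvi.aestronglyMeasurable.add aestronglyMeasurable_const
  have hBm : AEStronglyMeasurable B μ :=
    ((hui.aestronglyMeasurable.add hvi.aestronglyMeasurable).add aestronglyMeasurable_const)
  have hGm : AEStronglyMeasurable (Function.uncurry F) (μ.prod P) := by
    have e1 : AEStronglyMeasurable (fun p : Ω × ℝ => Real.exp (-(p.2 * A p.1))) (μ.prod P) :=
      Real.continuous_exp.comp_aestronglyMeasurable
        ((measurable_snd.aestronglyMeasurable.mul (hAm.comp_fst (ν := P))).neg)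
    have e2 : AEStronglyMeasurable (fun p : Ω × ℝ => Real.exp (-(p.2 * B p.1))) (μ.prod P) :=
      Real.continuous_exp.comp_aestronglyMeasurable
        ((measurable_snd.aestronglyMeasurable.mul (hBm.comp_fst (ν := P))).neg)
    exact ((measurable_const.div measurable_snd).aestronglyMeasurable.mul (e1.sub e2))
  have key : ∀ ω, (∫⁻ z, (‖F ω z‖₊ : ENNReal) ∂P)
      = ENNReal.ofReal (Real.log (1 + u ω / (v ω + σ2))) := by
    intro ω
    have h1 : (∫⁻ z, (‖F ω z‖₊ : ENNReal) ∂P)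
        = ∫⁻ z in Ioi (0:ℝ), ENNReal.ofReal (F ω z) := by
      refine setLIntegral_congr_fun measurableSet_Ioi ?_
      intro z hz
      exact Real.enorm_eq_ofReal (hFnn ω z hz)
    rw [h1, ← ofReal_integral_eq_lintegral_ofReal (hFi ω)
      ((ae_restrict_iff' measurableSet_Ioi).2 (Filter.Eventually.of_forall (hFnn ω))), hpt ω]
  have hG : Integrable (Function.uncurry F) (μ.prod P) := by
    refine ⟨hGm, ?_⟩
    rw [HasFiniteIntegral, lintegral_prod _ hGm.enorm]
    calc (∫⁻ ω, ∫⁻ z, (‖F ω z‖₊ : ENNReal) ∂P ∂μ)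
        = ∫⁻ ω, ENNReal.ofReal (Real.log (1 + u ω / (v ω + σ2))) ∂μ :=
          lintegral_congr fun ω => key ω
      _ ≤ ∫⁻ ω, ENNReal.ofReal (u ω / σ2) ∂μ :=
          lintegral_mono fun ω => ENNReal.ofReal_le_ofReal (hbound ω)
      _ < ⊤ := by
          rw [← ofReal_integral_eq_lintegral_ofReal (hui.div_const σ2)
            (Filter.Eventually.of_forall fun ω => div_nonneg (hu0 ω) hσ.le)]
          exact ENNReal.ofReal_lt_top
  have hswap := integral_integral_swap hG
  calc ∫ ω, Real.log (1 + u ω / (v ω + σ2)) ∂μ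
      = ∫ ω, (∫ z, F ω z ∂P) ∂μ := by
        exact integral_congr_ae (Filter.Eventually.of_forall fun ω => (hpt ω).symm)
    _ = ∫ z in Ioi (0:ℝ), ∫ ω, F ω z ∂μ := hswap
    _ = ∫ z in Ioi (0 : ℝ),
          (1 / z) * ((∫ ω, Real.exp (-z * (v ω + σ2)) ∂μ)
            - ∫ ω, Real.exp (-z * (u ω + v ω + σ2)) ∂μ) := by
        refine setIntegral_congr_fun measurableSet_Ioi fun z hz => ?_
        obtain ⟨hm1, hm2⟩ := hmgf z hz
        simp only [hF_def, hA_def, hB_def, ← neg_mul]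
        rw [integral_const_mul, integral_sub hm1 hm2]
end

section
/- For every x ≥ 0, ln(1 + x) = ∫₀^∞ (e^{-z} − e^{-z(1+x)})/z dz. -/
open MeasureTheory Set

lemma frullani_inner (z : ℝ) (hz : 0 < z) (a : ℝ) (ha : 1 ≤ a) :
    ∫ t in Ioc (1:ℝ) a, Real.exp (-z * t)
      = (Real.exp (-z) - Real.exp (-z * a)) / z := by
  rw [← intervalIntegral.integral_of_le ha]
  have : ∀ t ∈ uIcc (1:ℝ) a, HasDerivAt (fun t => -Real.exp (-z * t) / z)
      (Real.exp (-z * t)) t := by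
    intro t _
    have h1 : HasDerivAt (fun t : ℝ => -z * t) (-z) t := by
      simpa using (hasDerivAt_id t).const_mul (-z)
    have h2 := (h1.exp.neg.div_const z)
    refine h2.congr_deriv ?_
    rw [div_eq_iff hz.ne']
    ring
  rw [intervalIntegral.integral_eq_sub_of_hasDerivAt this]
  · field_simp
    ring
  · apply Continuous.intervalIntegrable
    exact (continuous_const.mul continuous_id).rexp

lemma inner_z (t : ℝ) (ht : 0 < t) :
    ∫ z in Ioi (0:ℝ), Real.exp (-(t * z)) = 1 / t := by
  have := integral_comp_mul_left_Ioi (fun u => Real.exp (-u)) 0 ht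
  simp only [mul_zero, integral_exp_neg_Ioi, neg_zero, Real.exp_zero, smul_eq_mul,
    mul_one] at this
  rw [this, one_div]

theorem frullani_log (x : ℝ) (hx : 0 ≤ x) :
    Real.log (1 + x)
      = ∫ z in Ioi (0 : ℝ), (Real.exp (-z) - Real.exp (-z * (1 + x))) / z := by
  set a : ℝ := 1 + x with ha_def
  have ha : 1 ≤ a := by simp [ha_def, hx]
  have ha0 : 0 < a := lt_of_lt_of_le one_pos ha
  -- integrability of (z,t) ↦ exp (-(z*t)) on Ioi 0 ×ˢ Ioc 1 a
  have hcont : Continuous fun p : ℝ × ℝ => Real.exp (-(p.1 * p.2)) :=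
    ((continuous_fst.mul continuous_snd).neg).rexp
  have hmeas : AEStronglyMeasurable (fun p : ℝ × ℝ => Real.exp (-(p.1 * p.2)))
      ((volume.restrict (Ioi (0:ℝ))).prod (volume.restrict (Ioc (1:ℝ) a))) :=
    hcont.aestronglyMeasurable
  have hint : Integrable (fun p : ℝ × ℝ => Real.exp (-(p.1 * p.2)))
      ((volume.restrict (Ioi (0:ℝ))).prod (volume.restrict (Ioc (1:ℝ) a))) := by
    rw [integrable_prod_iff hmeas]
    constructor
    · filter_upwards with z
      exact (Continuous.integrableOn_Ioc (by continuity))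
    · have hbound : ∀ᵐ z ∂(volume.restrict (Ioi (0:ℝ))),
          ‖∫ t in Ioc (1:ℝ) a, ‖Real.exp (-(z * t))‖‖ ≤ (a - 1) * Real.exp (-z) := by
        filter_upwards [ae_restrict_mem measurableSet_Ioi] with z hz
        have hz' : (0:ℝ) < z := hz
        rw [Real.norm_of_nonneg (integral_nonneg fun t => norm_nonneg _)]
        calc ∫ t in Ioc (1:ℝ) a, ‖Real.exp (-(z * t))‖
            ≤ ∫ t in Ioc (1:ℝ) a, Real.exp (-z) := by
              apply setIntegral_mono_on
              · exact (Continuous.integrableOn_Ioc (by continuity)).norm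
              · exact Continuous.integrableOn_Ioc continuous_const
              · exact measurableSet_Ioc
              · intro t ht
                rw [Real.norm_of_nonneg (Real.exp_pos _).le]
                apply Real.exp_le_exp.2
                nlinarith [ht.1]
          _ = (a - 1) * Real.exp (-z) := by
              rw [setIntegral_const]
              simp [Real.volume_Ioc, ENNReal.toReal_ofReal (by linarith : (0:ℝ) ≤ a - 1),
                smul_eq_mul, ha]
      have hintb : Integrable (fun z => (a - 1) * Real.exp (-z))
          (volume.restrict (Ioi (0:ℝ))) := by
        apply Integrable.const_mul
        have := exp_neg_integrableOn_Ioi 0 one_pos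
        simp at this
        exact this
      exact hintb.mono' (hmeas.norm.integral_prod_right') hbound
  -- Fubini
  have hswap := MeasureTheory.integral_integral_swap
    (f := fun z t => Real.exp (-(z * t))) hint
  -- RHS equals double integral
  have hRHS : (∫ z in Ioi (0 : ℝ), (Real.exp (-z) - Real.exp (-z * a)) / z)
      = ∫ z in Ioi (0:ℝ), ∫ t in Ioc (1:ℝ) a, Real.exp (-(z * t)) := by
    apply setIntegral_congr_fun measurableSet_Ioi
    intro z hz
    simp only [← neg_mul]
    exact (frullani_inner z hz a ha).symm
  rw [hRHS, hswap]
  have hLHS : (∫ t in Ioc (1:ℝ) a, ∫ z in Ioi (0:ℝ), Real.exp (-(z * t)))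
      = ∫ t in Ioc (1:ℝ) a, 1 / t := by
    apply setIntegral_congr_fun measurableSet_Ioc
    intro t ht
    have ht0 : 0 < t := lt_of_lt_of_le one_pos ht.1.le
    have hc : ∀ z : ℝ, -(z * t) = -(t * z) := fun z => by ring
    simp only [hc]
    exact inner_z t ht0
  rw [hLHS, ← intervalIntegral.integral_of_le ha, integral_one_div]
  · simp [ha_def]
  · intro h
    rw [Set.mem_uIcc] at h
    rcases h with h | h <;> linarith [h.1, h.2]
end

section
/- Lagrangian dual transform for the logarithm: for any γ ≥ 0, ln(1+γ) = max_{α ≥ 0} ( ln(1+α) − α + (1+α)γ/(1+γ) ), with the maximum attained at α* = γ. -/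
theorem lagrangian_dual_log (γ : ℝ) (hγ : 0 ≤ γ) :
    IsGreatest
      {r : ℝ | ∃ α : ℝ, 0 ≤ α ∧
        r = Real.log (1 + α) - α + (1 + α) * γ / (1 + γ)}
      (Real.log (1 + γ)) ∧
    Real.log (1 + γ) - γ + (1 + γ) * γ / (1 + γ) = Real.log (1 + γ) := by
  have hg : (0:ℝ) < 1 + γ := by linarith
  have hkey : (1 + γ) * γ / (1 + γ) = γ := by field_simp
  refine ⟨⟨⟨γ, hγ, by rw [hkey]; ring⟩, ?_⟩, by rw [hkey]; ring⟩
  rintro r ⟨α, hα, rfl⟩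
  have ha : (0:ℝ) < 1 + α := by linarith
  have hx : (0:ℝ) < (1 + α) / (1 + γ) := by positivity
  have hlog := Real.log_le_sub_one_of_pos hx
  rw [Real.log_div (by linarith) (by linarith)] at hlog
  have : (1 + α) / (1 + γ) - 1 = (α - γ) / (1 + γ) := by field_simp; ring
  rw [this] at hlog
  clear this
  have h2 : (1 + α) * γ / (1 + γ) = α - (α - γ) / (1 + γ) := by
    field_simp
    ring
  linarith
end
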